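/- For a positive invertible T ∈ B(H), the C*-log-convex hull of {T} equals {(Σᵢ Cᵢ*T⁻¹Cᵢ)⁻¹ : Σᵢ Cᵢ*Cᵢ = I}, i.e., this set is C*-log-convex, contains T, and is contained in every C*-log-convex set containing T. -/

import Mathlib

noncomputable section

/-- A subset of B(H) is C*-log-convex if it is closed under harmonic
C*-convex combinations (Σᵢ Cᵢ* Xᵢ⁻¹ Cᵢ)⁻¹. -/
def CstarLogConvex {H : Type*} [NormedAddCommGroup H] [InnerProductSpace ℂ H]
    [CompleteSpace H] (K : Set (H →L[ℂ] H)) : Prop :=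
  ∀ (n : ℕ) (X C : Fin n → H →L[ℂ] H),
    (∀ i, X i ∈ K) → ∑ i, star (C i) * C i = 1 →
      Ring.inverse (∑ i, star (C i) * Ring.inverse (X i) * C i) ∈ K

/-!
The set `S_T` of harmonic C*-combinations `(Σᵢ Cᵢ* T⁻¹ Cᵢ)⁻¹` contains `T` (one coefficient `1`)
and lies in every C*-log-convex set containing `T` (apply the definition to the constant family
`T`). It is C*-log-convex because a harmonic C*-combination of harmonic C*-combinations of `T` is
again one, with coefficients `Cᵢⱼ Dᵢ`: `Σᵢ Dᵢ* (Σⱼ Cᵢⱼ* a Cᵢⱼ) Dᵢ = Σᵢⱼ (Cᵢⱼ Dᵢ)* a (Cᵢⱼ Dᵢ)`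
for `a = T⁻¹` and `a = 1`. This needs `Σⱼ Cᵢⱼ* T⁻¹ Cᵢⱼ` to be invertible, so that inverting a
member of `S_T` recovers the sum: from `T⁻¹ ≥ r > 0` one gets `Σⱼ Cᵢⱼ* T⁻¹ Cᵢⱼ ≥ r Σⱼ Cᵢⱼ* Cᵢⱼ = r`.
-/

section HarmonicCombinations

variable {A : Type*}

def cstarHarmonicCombinations [Semiring A] [StarRing A] (T : A) : Set A :=
  {X | ∃ (n : ℕ) (C : Fin n → A), ∑ i, star (C i) * C i = 1 ∧
    X = Ring.inverse (∑ i, star (C i) * Ring.inverse T * C i)}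

lemma sum_star_mul_sum_star_mul_mul_mul [NonUnitalSemiring A] [StarRing A]
    {ι : Type*} {κ : ι → Type*} [Fintype ι] [∀ i, Fintype (κ i)]
    (D : ι → A) (C : ∀ i, κ i → A) (a : A) :
    ∑ i, star (D i) * (∑ j, star (C i j) * a * C i j) * D i =
      ∑ x : Σ i, κ i, star (C x.1 x.2 * D x.1) * a * (C x.1 x.2 * D x.1) := by
  rw [← Finset.univ_sigma_univ, Finset.sum_sigma]
  refine Finset.sum_congr rfl fun i _ => ?_
  rw [Finset.mul_sum, Finset.sum_mul]
  simp only [star_mul, mul_assoc]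

lemma mem_cstarHarmonicCombinations_of_fintype [Semiring A] [StarRing A]
    {ι : Type*} [Fintype ι] {T : A} (C : ι → A) (hC : ∑ i, star (C i) * C i = 1) :
    Ring.inverse (∑ i, star (C i) * Ring.inverse T * C i) ∈ cstarHarmonicCombinations T := by
  let e := Fintype.equivFin ι
  refine ⟨Fintype.card ι, C ∘ e.symm, ?_, ?_⟩
  · rw [← hC]
    exact Fintype.sum_equiv e.symm _ _ fun _ => rfl
  · congr 1
    exact (Fintype.sum_equiv e.symm _ _ fun _ => rfl).symm

lemma self_mem_cstarHarmonicCombinations [Semiring A] [StarRing A] {T : A} (hT : IsUnit T) :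
    T ∈ cstarHarmonicCombinations T := by
  simpa [Ring.inverse_inverse hT] using
    mem_cstarHarmonicCombinations_of_fintype (ι := Unit) (T := T) (fun _ => 1) (by simp)

lemma IsStrictlyPositive.sum_star_mul_mul [CStarAlgebra A] [PartialOrder A] [StarOrderedRing A]
    {ι : Type*} [Fintype ι] {a : A} (ha : IsStrictlyPositive a) {C : ι → A}
    (hC : ∑ i, star (C i) * C i = 1) : IsStrictlyPositive (∑ i, star (C i) * a * C i) := by
  nontriviality A
  obtain ⟨r, hr, hra⟩ : ∃ r > 0, algebraMap ℝ A r ≤ a :=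
    (CFC.exists_pos_algebraMap_le_iff ha.isSelfAdjoint).2 fun x hx => ha.spectrum_pos hx
  refine (isStrictlyPositive_algebraMap hr).of_le ?_
  calc algebraMap ℝ A r = ∑ i, star (C i) * algebraMap ℝ A r * C i := by
        simp only [← Algebra.commutes, mul_assoc, ← Finset.mul_sum, hC, mul_one]
    _ ≤ ∑ i, star (C i) * a * C i :=
        Finset.sum_le_sum fun i _ => star_left_conjugate_le_conjugate hra (C i)

end HarmonicCombinations

section Operators

variable {H : Type*} [NormedAddCommGroup H] [InnerProductSpace ℂ H] [CompleteSpace H]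

lemma cstarHarmonicCombinations_subset {T : H →L[ℂ] H} {K : Set (H →L[ℂ] H)}
    (hK : CstarLogConvex K) (hTK : T ∈ K) : cstarHarmonicCombinations T ⊆ K := by
  rintro _ ⟨n, C, hC, rfl⟩
  exact hK n (fun _ => T) C (fun _ => hTK) hC

lemma cstarLogConvex_cstarHarmonicCombinations {T : H →L[ℂ] H} (hT : IsStrictlyPositive T) :
    CstarLogConvex (cstarHarmonicCombinations T) := by
  intro n X D hX hD
  choose m C hC hXeq using hX
  have hXinv : ∀ i, Ring.inverse (X i) = ∑ j, star (C i j) * Ring.inverse T * C i j := fun i => by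
    rw [hXeq i, Ring.inverse_inverse (hT.ringInverse.sum_star_mul_mul (hC i)).isUnit]
  have hE : ∑ x : Σ i, Fin (m i), star (C x.1 x.2 * D x.1) * (C x.1 x.2 * D x.1) = 1 := by
    have h := sum_star_mul_sum_star_mul_mul_mul D C 1
    simp only [mul_one, hC] at h
    rw [← h, hD]
  simpa only [hXinv, sum_star_mul_sum_star_mul_mul_mul] using
    mem_cstarHarmonicCombinations_of_fintype _ hE

end Operators

/-- For a positive invertible T, the set {(Σᵢ Cᵢ*T⁻¹Cᵢ)⁻¹ : Σᵢ Cᵢ*Cᵢ = I} is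
the C*-log-convex hull of {T}: it is C*-log-convex, contains T, and is
contained in every C*-log-convex set (of positive invertible operators)
containing T. -/
theorem cstarLogConvexHull_singleton {H : Type*} [NormedAddCommGroup H]
    [InnerProductSpace ℂ H] [CompleteSpace H] (T : H →L[ℂ] H)
    (hT : 0 ≤ T) (hTinv : IsUnit T) :
    CstarLogConvex {X : H →L[ℂ] H | ∃ (n : ℕ) (C : Fin n → H →L[ℂ] H),
        ∑ i, star (C i) * C i = 1 ∧
        X = Ring.inverse (∑ i, star (C i) * Ring.inverse T * C i)} ∧
    T ∈ {X : H →L[ℂ] H | ∃ (n : ℕ) (C : Fin n → H →L[ℂ] H),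
        ∑ i, star (C i) * C i = 1 ∧
        X = Ring.inverse (∑ i, star (C i) * Ring.inverse T * C i)} ∧
    ∀ K : Set (H →L[ℂ] H), (∀ X ∈ K, 0 ≤ X ∧ IsUnit X) → CstarLogConvex K →
      T ∈ K →
      {X : H →L[ℂ] H | ∃ (n : ℕ) (C : Fin n → H →L[ℂ] H),
        ∑ i, star (C i) * C i = 1 ∧
        X = Ring.inverse (∑ i, star (C i) * Ring.inverse T * C i)} ⊆ K :=
  ⟨cstarLogConvex_cstarHarmonicCombinations (hTinv.isStrictlyPositive hT),
    self_mem_cstarHarmonicCombinations hTinv,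
    fun _ _ hK hTK => cstarHarmonicCombinations_subset hK hTK⟩
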